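/- For all natural numbers p and q, the integral of cos(s)^p * sin(s)^q over [0, π] equals zero if and only if p is odd. -/

import Mathlib

/-! The reflection `s ↦ π - s` fixes `sin` and negates `cos`, so the integral equals `(-1) ^ p`
times itself and vanishes for odd `p`. For even `p` the integrand is continuous, nonnegative on
`[0, π]` and positive at `π / 4`, so the integral is positive. -/

open Real

theorem integral_cos_pow_mul_sin_pow_eq_neg_one_pow_mul (p q : ℕ) :
    (∫ s in (0:ℝ)..π, cos s ^ p * sin s ^ q) =
      (-1) ^ p * ∫ s in (0:ℝ)..π, cos s ^ p * sin s ^ q := by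
  calc (∫ s in (0:ℝ)..π, cos s ^ p * sin s ^ q)
      = ∫ s in (0:ℝ)..π, cos (π - s) ^ p * sin (π - s) ^ q := by
        rw [intervalIntegral.integral_comp_sub_left (fun s => cos s ^ p * sin s ^ q)]
        simp
    _ = ∫ s in (0:ℝ)..π, (-1) ^ p * (cos s ^ p * sin s ^ q) := by
        congr 1 with s
        rw [cos_pi_sub, sin_pi_sub, neg_pow, mul_assoc]
    _ = (-1) ^ p * ∫ s in (0:ℝ)..π, cos s ^ p * sin s ^ q :=
        intervalIntegral.integral_const_mul _ _

theorem integral_cos_pow_mul_sin_pow_of_odd {p : ℕ} (hp : Odd p) (q : ℕ) :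
    (∫ s in (0:ℝ)..π, cos s ^ p * sin s ^ q) = 0 := by
  have h := integral_cos_pow_mul_sin_pow_eq_neg_one_pow_mul p q
  rw [hp.neg_one_pow] at h
  linarith

theorem integral_cos_pow_mul_sin_pow_pos_of_even {p : ℕ} (hp : Even p) (q : ℕ) :
    0 < ∫ s in (0:ℝ)..π, cos s ^ p * sin s ^ q := by
  refine intervalIntegral.integral_pos pi_pos (by fun_prop) ?_ ⟨π / 4, ?_, ?_⟩
  · intro s hs
    exact mul_nonneg (hp.pow_nonneg _) (pow_nonneg (sin_nonneg_of_nonneg_of_le_pi hs.1.le hs.2) _)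
  · constructor <;> linarith [pi_pos]
  · rw [cos_pi_div_four, sin_pi_div_four]
    positivity

theorem trig_integral_pi_eq_zero_iff (p q : ℕ) :
    (∫ s in (0:ℝ)..π, Real.cos s ^ p * Real.sin s ^ q) = 0 ↔ Odd p := by
  refine ⟨fun h => ?_, fun hp => integral_cos_pow_mul_sin_pow_of_odd hp q⟩
  by_contra hp
  exact (integral_cos_pow_mul_sin_pow_pos_of_even (Nat.not_odd_iff_even.mp hp) q).ne' h
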